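/- Let n > 0, K > 0, D ≥ 0, R₀ ≥ 0, c > 0, 0 < λ_min ≤ λ_max, and η = 2/((λ_min + λ_max)·n). Let S ⊆ ℝᵖ and let J, J' : ℝᵖ → M_{m×p}(ℝ) satisfy, for all θ, θ' ∈ S: ‖J(θ) − J(θ')‖_F ≤ K√n·‖θ − θ'‖₂, ‖J(θ)‖_F ≤ K√n, ‖J'(θ) − J'(θ')‖_F ≤ K√n·‖θ − θ'‖₂, and ‖J'(θ)‖_F ≤ K√n. Let θ₁, θ₂, θ̃₁, θ̃₂ : ℕ → S satisfy ‖θ₁(t) − θ₂(t)‖₂ ≤ D/√n and ‖θ̃₁(t) − θ̃₂(t)‖₂ ≤ D/√n for all t, and let r : ℕ → ℝᵐ satisfy ‖r(t)‖₂ ≤ R₀·e^{−c·t} for all t. Then for every T ∈ ℕ, ‖η · Σ_{t=0}^{T} (J'(θ̃₁(t))ᵀ·J(θ₁(t)) − J'(θ̃₂(t))ᵀ·J(θ₂(t)))·r(t)‖₂ ≤ 4·K²·D·R₀ / ((λ_min + λ_max)·√n·(1 − e^{−c})), which is O(n^{−1/2}) in the width n. -/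

import Mathlib

open Matrix

/-- Frobenius norm of a real matrix. -/
noncomputable def frobNorm {m p : ℕ} (A : Matrix (Fin m) (Fin p) ℝ) : ℝ :=
  Real.sqrt (∑ i, ∑ j, (A i j) ^ 2)

/-- ℓ²→ℓ² operator norm of a real matrix. -/
noncomputable def opNorm {m p : ℕ} (A : Matrix (Fin m) (Fin p) ℝ) : ℝ :=
  ‖LinearMap.toContinuousLinearMap (Matrix.toEuclideanLin A)‖

/-- Euclidean (ℓ²) norm of a vector in ℝᵖ. -/
noncomputable def eNorm {p : ℕ} (x : Fin p → ℝ) : ℝ :=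
  Real.sqrt (∑ i, (x i) ^ 2)

/-!
Write `M t = J'(θ̃₁ t)ᵀ J(θ₁ t) − J'(θ̃₂ t)ᵀ J(θ₂ t)`. Splitting
`M t = J'(θ̃₁ t)ᵀ (J(θ₁ t) − J(θ₂ t)) + (J'(θ̃₁ t) − J'(θ̃₂ t))ᵀ J(θ₂ t)`,
each factor is either bounded by `K√n` or, by the Lipschitz bound and the `D/√n`-closeness,
by `K D`; hence `‖M t‖_F ≤ 2 K² D √n`. Since `‖M t r t‖₂ ≤ ‖M t‖_F ‖r t‖₂`, the sum is
dominated by a geometric series with ratio `e^{−c}`, and the factor `η ∼ 1/n` turns the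
resulting `√n` into `1/√n`.
-/

section Frobenius

attribute [local instance] Matrix.frobeniusNormedAddCommGroup

theorem frobNorm_eq_norm {m p : ℕ} (A : Matrix (Fin m) (Fin p) ℝ) : frobNorm A = ‖A‖ := by
  simp only [frobNorm, Matrix.frobenius_norm_def, ← Real.sqrt_eq_rpow, Real.rpow_two,
    Real.norm_eq_abs, sq_abs]

theorem frobNorm_add_le {m p : ℕ} (A B : Matrix (Fin m) (Fin p) ℝ) :
    frobNorm (A + B) ≤ frobNorm A + frobNorm B := by
  simpa only [frobNorm_eq_norm] using norm_add_le A B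

theorem frobNorm_mul_le {a b c : ℕ} (A : Matrix (Fin a) (Fin b) ℝ) (B : Matrix (Fin b) (Fin c) ℝ) :
    frobNorm (A * B) ≤ frobNorm A * frobNorm B := by
  simpa only [frobNorm_eq_norm] using Matrix.frobenius_norm_mul A B

theorem frobNorm_transpose {a b : ℕ} (A : Matrix (Fin a) (Fin b) ℝ) :
    frobNorm Aᵀ = frobNorm A := by
  simpa only [frobNorm_eq_norm] using Matrix.frobenius_norm_transpose A

end Frobenius

theorem eNorm_eq_norm {p : ℕ} (x : Fin p → ℝ) : eNorm x = ‖WithLp.toLp 2 x‖ := by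
  simp only [eNorm, EuclideanSpace.norm_eq, Real.norm_eq_abs, sq_abs]

theorem eNorm_nonneg {p : ℕ} (x : Fin p → ℝ) : 0 ≤ eNorm x := Real.sqrt_nonneg _

theorem frobNorm_nonneg {m p : ℕ} (A : Matrix (Fin m) (Fin p) ℝ) : 0 ≤ frobNorm A :=
  Real.sqrt_nonneg _

theorem eNorm_smul {p : ℕ} (a : ℝ) (x : Fin p → ℝ) : eNorm (a • x) = |a| * eNorm x := by
  rw [eNorm_eq_norm, eNorm_eq_norm, WithLp.toLp_smul, norm_smul, Real.norm_eq_abs]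

theorem eNorm_sum_le {p : ℕ} {ι : Type*} (s : Finset ι) (f : ι → Fin p → ℝ) :
    eNorm (∑ t ∈ s, f t) ≤ ∑ t ∈ s, eNorm (f t) := by
  simpa only [eNorm_eq_norm, WithLp.toLp_sum] using norm_sum_le s fun t => WithLp.toLp 2 (f t)

theorem eNorm_mulVec_le {m p : ℕ} (A : Matrix (Fin m) (Fin p) ℝ) (x : Fin p → ℝ) :
    eNorm (A *ᵥ x) ≤ frobNorm A * eNorm x := by
  rw [eNorm, frobNorm, eNorm, ← Real.sqrt_mul (by positivity), Finset.sum_mul]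
  refine Real.sqrt_le_sqrt (Finset.sum_le_sum fun i _ => ?_)
  simpa [Matrix.mulVec, dotProduct] using Finset.sum_mul_sq_le_sq_mul_sq Finset.univ (A i) x

theorem frobNorm_transpose_mul_sub_transpose_mul_le {m p q : ℕ}
    {A A' : Matrix (Fin m) (Fin p) ℝ} {B B' : Matrix (Fin m) (Fin q) ℝ} {a δ : ℝ}
    (hA : frobNorm A ≤ a) (hB' : frobNorm B' ≤ a)
    (hAA' : frobNorm (A - A') ≤ δ) (hBB' : frobNorm (B - B') ≤ δ) :
    frobNorm (Aᵀ * B - A'ᵀ * B') ≤ 2 * a * δ := by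
  have hsplit : Aᵀ * B - A'ᵀ * B' = Aᵀ * (B - B') + (A - A')ᵀ * B' := by
    rw [Matrix.transpose_sub, Matrix.sub_mul, Matrix.mul_sub]; abel
  have ha : 0 ≤ a := (frobNorm_nonneg A).trans hA
  have hδ : 0 ≤ δ := (frobNorm_nonneg _).trans hAA'
  calc frobNorm (Aᵀ * B - A'ᵀ * B')
      ≤ frobNorm A * frobNorm (B - B') + frobNorm (A - A') * frobNorm B' := by
        rw [hsplit, ← frobNorm_transpose A, ← frobNorm_transpose (A - A')]
        exact (frobNorm_add_le _ _).trans (add_le_add (frobNorm_mul_le _ _) (frobNorm_mul_le _ _))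
    _ ≤ a * δ + δ * a :=
        add_le_add (mul_le_mul hA hBB' (frobNorm_nonneg _) ha)
          (mul_le_mul hAA' hB' (frobNorm_nonneg _) hδ)
    _ = 2 * a * δ := by ring

theorem sum_range_exp_neg_mul_le {c : ℝ} (hc : 0 < c) (N : ℕ) :
    ∑ t ∈ Finset.range N, Real.exp (-c * t) ≤ 1 / (1 - Real.exp (-c)) := by
  have hpow : ∀ t : ℕ, Real.exp (-c * t) = Real.exp (-c) ^ t := fun t => by
    rw [← Real.exp_nat_mul, mul_comm]
  simpa only [hpow, Finset.range_eq_Ico, pow_zero] using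
    geom_sum_Ico_le_of_lt_one (m := 0) (n := N) (Real.exp_pos _).le
      (Real.exp_lt_one_iff.mpr (neg_lt_zero.mpr hc))

theorem eNorm_smul_sum_le_of_le_exp {p : ℕ} {v : ℕ → Fin p → ℝ} {η C c : ℝ}
    (hη : 0 ≤ η) (hC : 0 ≤ C) (hc : 0 < c) (hv : ∀ t : ℕ, eNorm (v t) ≤ C * Real.exp (-c * t))
    (N : ℕ) : eNorm (η • ∑ t ∈ Finset.range N, v t) ≤ η * C / (1 - Real.exp (-c)) := by
  rw [eNorm_smul, abs_of_nonneg hη, mul_div_assoc, ← mul_one_div C]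
  gcongr
  calc eNorm (∑ t ∈ Finset.range N, v t)
      ≤ ∑ t ∈ Finset.range N, C * Real.exp (-c * t) :=
        (eNorm_sum_le _ _).trans (Finset.sum_le_sum fun t _ => hv t)
    _ ≤ C * (1 / (1 - Real.exp (-c))) := by
        rw [← Finset.mul_sum]; gcongr; exact sum_range_exp_neg_mul_le hc N

theorem le_mul_of_le_mul_sqrt_of_le_div_sqrt {n K D x e : ℝ} (hn : 0 < n) (hK : 0 ≤ K)
    (hx : x ≤ K * Real.sqrt n * e) (he : e ≤ D / Real.sqrt n) : x ≤ K * D := by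
  have hsn : 0 < Real.sqrt n := Real.sqrt_pos.mpr hn
  calc x ≤ K * Real.sqrt n * (D / Real.sqrt n) := hx.trans (by gcongr)
    _ = K * D := by field_simp

/-- Quantitative core of Theorem 1 ("no ripple effect"): with `J, J'` Jacobian maps that are
`K√n`-Lipschitz and `K√n`-bounded in Frobenius norm on `S`, trajectories `θ₁, θ₂` and
interpolation points `θ̃₁, θ̃₂` staying `D/√n`-close, residuals `‖r t‖₂ ≤ R₀ e^{−c t}`, and
learning rate `η = 2/((λmin + λmax) n)`, for every `T`,
`‖η Σ_{t=0}^{T} (J'(θ̃₁ t)ᵀ J(θ₁ t) − J'(θ̃₂ t)ᵀ J(θ₂ t)) (r t)‖₂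
  ≤ 4 K² D R₀ / ((λmin + λmax) √n (1 − e^{−c}))`. -/
theorem stmt_12 {m p : ℕ} (n K D R₀ c lmin lmax η : ℝ)
    (hn : 0 < n) (hK : 0 < K) (hD : 0 ≤ D) (hR₀ : 0 ≤ R₀) (hc : 0 < c)
    (hmin : 0 < lmin) (hle : lmin ≤ lmax) (hη : η = 2 / ((lmin + lmax) * n))
    (S : Set (Fin p → ℝ)) (J J' : (Fin p → ℝ) → Matrix (Fin m) (Fin p) ℝ)
    (hJ_lip : ∀ θ ∈ S, ∀ θ' ∈ S,
      frobNorm (J θ - J θ') ≤ K * Real.sqrt n * eNorm (θ - θ'))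
    (hJ_bdd : ∀ θ ∈ S, frobNorm (J θ) ≤ K * Real.sqrt n)
    (hJ'_lip : ∀ θ ∈ S, ∀ θ' ∈ S,
      frobNorm (J' θ - J' θ') ≤ K * Real.sqrt n * eNorm (θ - θ'))
    (hJ'_bdd : ∀ θ ∈ S, frobNorm (J' θ) ≤ K * Real.sqrt n)
    (θ₁ θ₂ θt₁ θt₂ : ℕ → (Fin p → ℝ))
    (hθ₁S : ∀ t, θ₁ t ∈ S) (hθ₂S : ∀ t, θ₂ t ∈ S)
    (hθt₁S : ∀ t, θt₁ t ∈ S) (hθt₂S : ∀ t, θt₂ t ∈ S)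
    (hclose : ∀ t, eNorm (θ₁ t - θ₂ t) ≤ D / Real.sqrt n)
    (htclose : ∀ t, eNorm (θt₁ t - θt₂ t) ≤ D / Real.sqrt n)
    (r : ℕ → (Fin p → ℝ)) (hr : ∀ t : ℕ, eNorm (r t) ≤ R₀ * Real.exp (-c * t)) :
    ∀ T : ℕ,
      eNorm (η • ∑ t ∈ Finset.range (T + 1),
          ((J' (θt₁ t))ᵀ * J (θ₁ t) - (J' (θt₂ t))ᵀ * J (θ₂ t)).mulVec (r t))
        ≤ 4 * K ^ 2 * D * R₀
          / ((lmin + lmax) * Real.sqrt n * (1 - Real.exp (-c))) := by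
  intro T
  have hsn : 0 < Real.sqrt n := Real.sqrt_pos.mpr hn
  have hlam : 0 < lmin + lmax := by linarith
  have hM : ∀ t : ℕ, frobNorm ((J' (θt₁ t))ᵀ * J (θ₁ t) - (J' (θt₂ t))ᵀ * J (θ₂ t))
      ≤ 2 * (K * Real.sqrt n) * (K * D) := fun t =>
    frobNorm_transpose_mul_sub_transpose_mul_le (hJ'_bdd _ (hθt₁S t)) (hJ_bdd _ (hθ₂S t))
      (le_mul_of_le_mul_sqrt_of_le_div_sqrt hn hK.le (hJ'_lip _ (hθt₁S t) _ (hθt₂S t))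
        (htclose t))
      (le_mul_of_le_mul_sqrt_of_le_div_sqrt hn hK.le (hJ_lip _ (hθ₁S t) _ (hθ₂S t)) (hclose t))
  have hterm : ∀ t : ℕ,
      eNorm (((J' (θt₁ t))ᵀ * J (θ₁ t) - (J' (θt₂ t))ᵀ * J (θ₂ t)) *ᵥ r t)
        ≤ 2 * (K * Real.sqrt n) * (K * D) * R₀ * Real.exp (-c * t) := fun t =>
    (eNorm_mulVec_le _ _).trans <| by
      rw [mul_assoc _ R₀]
      exact mul_le_mul (hM t) (hr t) (eNorm_nonneg _) (by positivity)
  refine (eNorm_smul_sum_le_of_le_exp (by rw [hη]; positivity) (by positivity) hc hterm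
    (T + 1)).trans_eq ?_
  have h1e : 0 < 1 - Real.exp (-c) := sub_pos.mpr (Real.exp_lt_one_iff.mpr (by linarith))
  rw [hη]
  field_simp
  rw [Real.sq_sqrt hn.le]
  ring
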